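/- arXiv:1902.04095 — 2 statements merged into one kernel-verified Lean document; each statement's English description precedes it below -/
import Mathlib

section
/- Assume k₁² ≠ k₂². Then for every x ≠ y in ℝ³ and every constant vector ν ∈ ℝ³, the traction in the variable y satisfies T(∂_y,ν)E₂₁(x,y) = (iωη/(k₁²−k₂²)) ν (k₁²γ_{k₁}(x,y) − k₂²γ_{k₂}(x,y)) − (2iμωη/((k₁²−k₂²)(λ+2μ))) M(∂_y,ν)(∇_y[γ_{k₁}−γ_{k₂}])(x,y), where all differentiations in the operators T and M are taken in y. -/
noncomputable section

open scoped BigOperators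

/-- Three-dimensional Euclidean space. -/
abbrev V3 : Type := EuclideanSpace ℝ (Fin 3)

/-- Partial derivative in the `i`-th coordinate direction. -/
def pd (i : Fin 3) (f : V3 → ℂ) : V3 → ℂ :=
  fun x => fderiv ℝ f x (EuclideanSpace.single i (1 : ℝ))

/-- Laplacian. -/
def lap (f : V3 → ℂ) : V3 → ℂ := fun x => ∑ i, pd i (pd i f) x

/-- Directional derivative `ν·∇` along the constant vector `ν`. -/
def dirD (ν : Fin 3 → ℝ) (f : V3 → ℂ) : V3 → ℂ :=
  fun x => ∑ i, (ν i : ℂ) * pd i f x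

/-- Divergence of a vector field. -/
def vdiv (v : Fin 3 → V3 → ℂ) : V3 → ℂ := fun x => ∑ i, pd i (v i) x

/-- Levi–Civita symbol on `Fin 3`. -/
def eps (i j k : Fin 3) : ℝ :=
  if (i, j, k) = (0, 1, 2) ∨ (i, j, k) = (1, 2, 0) ∨ (i, j, k) = (2, 0, 1) then 1
  else if (i, j, k) = (0, 2, 1) ∨ (i, j, k) = (2, 1, 0) ∨ (i, j, k) = (1, 0, 2) then -1
  else 0

/-- Curl of a vector field: `(curl v)_i = Σ_{l,m} ε_{ilm} ∂_l v_m`. -/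
def curl (v : Fin 3 → V3 → ℂ) : Fin 3 → V3 → ℂ :=
  fun i x => ∑ l, ∑ m, (eps i l m : ℂ) * pd l (v m) x

/-- Cross product of a constant real vector with a complex vector. -/
def crossR (ν : Fin 3 → ℝ) (w : Fin 3 → ℂ) : Fin 3 → ℂ :=
  fun i => ∑ l, ∑ m, (eps i l m : ℂ) * (ν l : ℂ) * w m

/-- Günter derivative `M(∂,ν)` acting on a vector field,
with entries `m^{ij}(∂,ν) = ν^j ∂_i − ν^i ∂_j`. -/
def gunterM (ν : Fin 3 → ℝ) (v : Fin 3 → V3 → ℂ) : Fin 3 → V3 → ℂ :=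
  fun i x => ∑ j, ((ν j : ℂ) * pd i (v j) x - (ν i : ℂ) * pd j (v j) x)

/-- Traction operator `T(∂,ν)v = 2μ ∂_ν v + λ ν (∇·v) + μ ν × curl v`. -/
def traction (lam μ : ℝ) (ν : Fin 3 → ℝ) (v : Fin 3 → V3 → ℂ) : Fin 3 → V3 → ℂ :=
  fun i x => 2 * (μ : ℂ) * dirD ν (v i) x + (lam : ℂ) * (ν i : ℂ) * vdiv v x
    + (μ : ℂ) * crossR ν (fun m => curl v m x) i

/-- Helmholtz fundamental solution `γ_k(x,y) = exp(i k |x−y|)/(4π|x−y|)`. -/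
def gammaK (k : ℂ) (x y : V3) : ℂ :=
  Complex.exp (Complex.I * k * (‖x - y‖ : ℂ)) / ((4 * Real.pi * ‖x - y‖ : ℝ) : ℂ)

/-- Kupradze tensor entry `E(x,y)_{ij}`:
`E = (1/μ)γ_{k_s} I + (1/(ρω²)) ∇_x∇_x^⊤[γ_{k_s} − γ_{k_p}]`. -/
def kupE (μ ρ ω : ℝ) (ks kp : ℂ) (i j : Fin 3) (x y : V3) : ℂ :=
  (1 / (μ : ℂ)) * gammaK ks x y * (if i = j then 1 else 0)
    + (1 / ((ρ : ℂ) * (ω : ℂ) ^ 2)) *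
      pd i (pd j (fun w => gammaK ks w y - gammaK kp w y)) x

/-- Thermoelastic fundamental-solution block `E₁₁`, entry `(i,j)`. -/
def E11 (μ ρ ω : ℝ) (ks kp k1 k2 : ℂ) (i j : Fin 3) (x y : V3) : ℂ :=
  (1 / (μ : ℂ)) * gammaK ks x y * (if i = j then 1 else 0)
    + (1 / ((ρ : ℂ) * (ω : ℂ) ^ 2)) *
      pd i (pd j (fun w => gammaK ks w y - gammaK k1 w y)) x
    - (1 / ((ρ : ℂ) * (ω : ℂ) ^ 2)) * ((kp ^ 2 - k1 ^ 2) / (k1 ^ 2 - k2 ^ 2)) *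
      pd i (pd j (fun w => gammaK k1 w y - gammaK k2 w y)) x

/-- Thermoelastic fundamental-solution block `E₁₂`, component `j`. -/
def E12 (lam μ gam : ℝ) (k1 k2 : ℂ) (j : Fin 3) (x y : V3) : ℂ :=
  -((gam : ℂ) / ((k1 ^ 2 - k2 ^ 2) * ((lam : ℂ) + 2 * (μ : ℂ)))) *
    pd j (fun w => gammaK k1 w y - gammaK k2 w y) x

/-- Thermoelastic fundamental-solution block `E₂₁`, component `j`. -/
def E21 (lam μ ω η : ℝ) (k1 k2 : ℂ) (j : Fin 3) (x y : V3) : ℂ :=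
  (Complex.I * (ω : ℂ) * (η : ℂ) / ((k1 ^ 2 - k2 ^ 2) * ((lam : ℂ) + 2 * (μ : ℂ)))) *
    pd j (fun w => gammaK k1 w y - gammaK k2 w y) x

/-- Thermoelastic fundamental-solution block `E₂₂`. -/
def E22 (kp k1 k2 : ℂ) (x y : V3) : ℂ :=
  -(1 / (k1 ^ 2 - k2 ^ 2)) *
    ((kp ^ 2 - k1 ^ 2) * gammaK k1 x y - (kp ^ 2 - k2 ^ 2) * gammaK k2 x y)


/-! ### Auxiliary scalar functions and derivative lemmas -/

def Fk (k : ℂ) (t : ℝ) : ℂ :=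
  Complex.exp (Complex.I * k * (t : ℂ)) / ((4 * Real.pi * t : ℝ) : ℂ)

def F1 (k : ℂ) (t : ℝ) : ℂ :=
  Complex.exp (Complex.I * k * (t : ℂ)) * (Complex.I * k * (t:ℂ) - 1)
    / (4 * (Real.pi:ℂ) * (t:ℂ)^2)

def Gk (k : ℂ) (t : ℝ) : ℂ :=
  Complex.exp (Complex.I * k * (t : ℂ)) * (Complex.I * k * (t:ℂ) - 1)
    / (4 * (Real.pi:ℂ) * (t:ℂ)^3)

def G1 (k : ℂ) (t : ℝ) : ℂ :=
  Complex.exp (Complex.I * k * (t : ℂ)) * (-(k^2) * (t:ℂ)^2 - 3*(Complex.I * k * (t:ℂ) - 1))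
    / (4 * (Real.pi:ℂ) * (t:ℂ)^4)

lemma pi_ne : ((Real.pi : ℂ)) ≠ 0 := by exact_mod_cast Real.pi_ne_zero

lemma gammaK_eq (k : ℂ) (x y : V3) : gammaK k x y = Fk k ‖x - y‖ := rfl

lemma hasDerivAt_coe (t : ℝ) : HasDerivAt (fun s : ℝ => (s : ℂ)) 1 t := by
  exact Complex.ofRealCLM.hasDerivAt (x := t)

lemma hasDerivAt_exp_Ikt (k : ℂ) (t : ℝ) :
    HasDerivAt (fun s : ℝ => Complex.exp (Complex.I * k * (s:ℂ)))
      (Complex.I * k * Complex.exp (Complex.I * k * (t:ℂ))) t := by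
  have h1 : HasDerivAt (fun s : ℝ => Complex.I * k * (s:ℂ)) (Complex.I * k) t := by
    simpa using (hasDerivAt_coe t).const_mul (Complex.I * k)
  simpa [mul_comm] using h1.cexp

set_option maxHeartbeats 1000000 in
lemma Fk_hasDerivAt (k : ℂ) {t : ℝ} (ht : t ≠ 0) : HasDerivAt (Fk k) (F1 k t) t := by
  have ht' : (t:ℂ) ≠ 0 := by exact_mod_cast ht
  have hden : HasDerivAt (fun s : ℝ => (((4 * Real.pi * s : ℝ)) : ℂ)) (4 * (Real.pi:ℂ)) t := by
    have h2 := (hasDerivAt_coe t).const_mul ((4:ℂ) * (Real.pi:ℂ))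
    have : (fun s : ℝ => (((4 * Real.pi * s : ℝ)) : ℂ)) = fun s : ℝ => (4:ℂ) * (Real.pi:ℂ) * (s:ℂ) := by
      funext s; push_cast; ring
    rw [this]
    simpa using h2
  have hd0 : (((4 * Real.pi * t : ℝ)) : ℂ) ≠ 0 := by
    push_cast
    exact mul_ne_zero (mul_ne_zero (by norm_num) pi_ne) ht'
  have h := (hasDerivAt_exp_Ikt k t).div hden hd0
  refine h.congr_deriv (Eq.symm ?_)
  unfold F1
  push_cast
  rw [div_eq_div_iff (mul_ne_zero (mul_ne_zero (by norm_num) pi_ne) (pow_ne_zero _ ht'))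
    (pow_ne_zero _ (mul_ne_zero (mul_ne_zero (by norm_num) pi_ne) ht'))]
  ring

set_option maxHeartbeats 1000000 in
lemma Gk_hasDerivAt (k : ℂ) {t : ℝ} (ht : t ≠ 0) : HasDerivAt (Gk k) (G1 k t) t := by
  have ht' : (t:ℂ) ≠ 0 := by exact_mod_cast ht
  have hnum : HasDerivAt (fun s : ℝ => Complex.exp (Complex.I * k * (s:ℂ)) * (Complex.I * k * (s:ℂ) - 1))
      (-(k^2) * (t:ℂ) * Complex.exp (Complex.I * k * (t:ℂ))) t := by
    have h1 := (hasDerivAt_exp_Ikt k t).mul (((hasDerivAt_coe t).const_mul (Complex.I * k)).sub_const 1)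
    refine h1.congr_deriv (Eq.symm ?_)
    simp only [mul_one]
    linear_combination (-(k^2) * (t:ℂ) * Complex.exp (Complex.I*k*(t:ℂ))) * Complex.I_sq
  have hden : HasDerivAt (fun s : ℝ => 4 * (Real.pi:ℂ) * (s:ℂ)^3) (12 * (Real.pi:ℂ) * (t:ℂ)^2) t := by
    have h3 := (((hasDerivAt_coe t).mul (hasDerivAt_coe t)).mul (hasDerivAt_coe t)).const_mul ((4:ℂ) * (Real.pi:ℂ))
    have he : (fun s : ℝ => 4 * (Real.pi:ℂ) * (s:ℂ)^3) = fun s : ℝ => (4:ℂ) * (Real.pi:ℂ) * ((s:ℂ) * (s:ℂ) * (s:ℂ)) := by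
      funext s; ring
    rw [he]
    refine h3.congr_deriv (Eq.symm ?_)
    change _ = 4 * (Real.pi:ℂ) * ((1 * (t:ℂ) + (t:ℂ) * 1) * (t:ℂ) + (t:ℂ) * (t:ℂ) * 1)
    ring
  have hd0 : (4 * (Real.pi:ℂ) * (t:ℂ)^3) ≠ 0 :=
    mul_ne_zero (mul_ne_zero (by norm_num) pi_ne) (pow_ne_zero _ ht')
  have h := hnum.div hden hd0
  have heq : Gk k = fun s : ℝ => Complex.exp (Complex.I * k * (s:ℂ)) * (Complex.I * k * (s:ℂ) - 1) / (4 * (Real.pi:ℂ) * (s:ℂ)^3) := by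
    funext s
    unfold Gk
    rfl
  rw [heq]
  refine h.congr_deriv (Eq.symm ?_)
  unfold G1
  rw [div_eq_div_iff (mul_ne_zero (mul_ne_zero (by norm_num) pi_ne) (pow_ne_zero _ ht'))
    (pow_ne_zero _ (mul_ne_zero (mul_ne_zero (by norm_num) pi_ne) (pow_ne_zero _ ht')))]
  ring

lemma norm_hasFDerivAt {v : V3} (hv : v ≠ 0) :
    HasFDerivAt (fun w : V3 => ‖w‖) ((‖v‖)⁻¹ • innerSL ℝ v) v := by
  have hq : HasFDerivAt (fun w : V3 => ‖w‖^2) (2 • (innerSL ℝ v)) v :=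
    (hasStrictFDerivAt_norm_sq v).hasFDerivAt
  have hq0 : ‖v‖^2 ≠ 0 := pow_ne_zero _ (norm_ne_zero_iff.mpr hv)
  have hs := Real.hasDerivAt_sqrt hq0
  have h := hs.comp_hasFDerivAt v hq
  have heq : (Real.sqrt ∘ fun w : V3 => ‖w‖^2) = fun w : V3 => ‖w‖ := by
    funext w
    simp [Real.sqrt_sq (norm_nonneg w)]
  rw [heq] at h
  refine h.congr_fderiv (Eq.symm ?_)
  rw [Real.sqrt_sq (norm_nonneg v)]
  ext w
  simp [smul_smul]
  ring

lemma norm_sub_right_hasFDerivAt (x : V3) {z : V3} (h : z ≠ x) :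
    HasFDerivAt (fun w : V3 => ‖x - w‖)
      (-((‖x - z‖)⁻¹ • innerSL ℝ (x - z))) z := by
  have hv : x - z ≠ 0 := sub_ne_zero.mpr (Ne.symm h)
  have haff : HasFDerivAt (fun w : V3 => x - w) (-(ContinuousLinearMap.id ℝ V3)) z := by
    exact (hasFDerivAt_id (𝕜 := ℝ) z).const_sub x
  have h2 : HasFDerivAt (fun w : V3 => ‖x - w‖)
      (((‖x - z‖)⁻¹ • innerSL ℝ (x - z)).comp (-(ContinuousLinearMap.id ℝ V3))) z :=
    (norm_hasFDerivAt hv).comp z haff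
  refine h2.congr_fderiv ?_
  ext w
  simp

lemma norm_sub_left_hasFDerivAt {x : V3} (z : V3) (h : z ≠ x) :
    HasFDerivAt (fun w : V3 => ‖w - z‖)
      ((‖x - z‖)⁻¹ • innerSL ℝ (x - z)) x := by
  have hv : x - z ≠ 0 := sub_ne_zero.mpr (Ne.symm h)
  have haff : HasFDerivAt (fun w : V3 => w - z) (ContinuousLinearMap.id ℝ V3) x := by
    exact (hasFDerivAt_id (𝕜 := ℝ) x).sub_const z
  have h2 : HasFDerivAt (fun w : V3 => ‖w - z‖)
      (((‖x - z‖)⁻¹ • innerSL ℝ (x - z)).comp (ContinuousLinearMap.id ℝ V3)) x :=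
    (norm_hasFDerivAt hv).comp x haff
  refine h2.congr_fderiv ?_
  ext w
  simp

lemma pd_congr {f g : V3 → ℂ} {y : V3} (h : ∀ᶠ z in nhds y, f z = g z) (i : Fin 3) :
    pd i f y = pd i g y := by
  unfold pd
  rw [Filter.EventuallyEq.fderiv_eq h]

lemma pd_fst (k1 k2 : ℂ) (j : Fin 3) {x z : V3} (h : z ≠ x) :
    pd j (fun w => gammaK k1 w z - gammaK k2 w z) x
      = (Gk k1 ‖x - z‖ - Gk k2 ‖x - z‖) * ((x j - z j : ℝ) : ℂ) := by
  have hr : ‖x - z‖ ≠ 0 := norm_ne_zero_iff.mpr (sub_ne_zero.mpr (Ne.symm h))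
  have hrc : ((‖x - z‖ : ℝ) : ℂ) ≠ 0 := by exact_mod_cast hr
  have hn := norm_sub_left_hasFDerivAt (x := x) z h
  have h1 : HasFDerivAt (fun w : V3 => gammaK k1 w z)
      ((ContinuousLinearMap.smulRight (1 : ℝ →L[ℝ] ℝ) (F1 k1 ‖x - z‖)).comp
        ((‖x - z‖)⁻¹ • innerSL ℝ (x - z))) x :=
    ((Fk_hasDerivAt k1 hr).hasFDerivAt).comp (g := Fk k1) x hn
  have h2 : HasFDerivAt (fun w : V3 => gammaK k2 w z)
      ((ContinuousLinearMap.smulRight (1 : ℝ →L[ℝ] ℝ) (F1 k2 ‖x - z‖)).comp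
        ((‖x - z‖)⁻¹ • innerSL ℝ (x - z))) x :=
    ((Fk_hasDerivAt k2 hr).hasFDerivAt).comp (g := Fk k2) x hn
  have h3 := (h1.sub h2)
  unfold pd
  rw [HasFDerivAt.fderiv (f := fun w => gammaK k1 w z - gammaK k2 w z) h3]
  have hinner : (innerSL ℝ (x - z)) (EuclideanSpace.single j (1:ℝ)) = x j - z j := by
    simp [EuclideanSpace.inner_single_right, PiLp.sub_apply]
  simp only [ContinuousLinearMap.sub_apply, ContinuousLinearMap.comp_apply,
    ContinuousLinearMap.smul_apply, ContinuousLinearMap.smulRight_apply,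
    ContinuousLinearMap.one_apply, hinner, Complex.real_smul, smul_eq_mul]
  unfold Gk F1
  push_cast
  field_simp

lemma pd_snd (k1 k2 : ℂ) (j : Fin 3) {x z : V3} (h : z ≠ x) :
    pd j (fun w => gammaK k1 x w - gammaK k2 x w) z
      = -((Gk k1 ‖x - z‖ - Gk k2 ‖x - z‖) * ((x j - z j : ℝ) : ℂ)) := by
  have hr : ‖x - z‖ ≠ 0 := norm_ne_zero_iff.mpr (sub_ne_zero.mpr (Ne.symm h))
  have hrc : ((‖x - z‖ : ℝ) : ℂ) ≠ 0 := by exact_mod_cast hr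
  have hn := norm_sub_right_hasFDerivAt x h
  have h1 : HasFDerivAt (fun w : V3 => gammaK k1 x w)
      ((ContinuousLinearMap.smulRight (1 : ℝ →L[ℝ] ℝ) (F1 k1 ‖x - z‖)).comp
        (-((‖x - z‖)⁻¹ • innerSL ℝ (x - z)))) z :=
    ((Fk_hasDerivAt k1 hr).hasFDerivAt).comp (g := Fk k1) z hn
  have h2 : HasFDerivAt (fun w : V3 => gammaK k2 x w)
      ((ContinuousLinearMap.smulRight (1 : ℝ →L[ℝ] ℝ) (F1 k2 ‖x - z‖)).comp
        (-((‖x - z‖)⁻¹ • innerSL ℝ (x - z)))) z :=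
    ((Fk_hasDerivAt k2 hr).hasFDerivAt).comp (g := Fk k2) z hn
  have h3 := (h1.sub h2)
  unfold pd
  rw [HasFDerivAt.fderiv (f := fun w => gammaK k1 x w - gammaK k2 x w) h3]
  have hinner : (innerSL ℝ (x - z)) (EuclideanSpace.single j (1:ℝ)) = x j - z j := by
    simp [EuclideanSpace.inner_single_right, PiLp.sub_apply]
  simp only [ContinuousLinearMap.sub_apply, ContinuousLinearMap.comp_apply,
    ContinuousLinearMap.neg_apply, ContinuousLinearMap.smul_apply,
    ContinuousLinearMap.smulRight_apply, ContinuousLinearMap.one_apply, hinner, Complex.real_smul, smul_eq_mul]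
  unfold Gk F1
  push_cast
  field_simp
  ring

lemma pd_h (c k1 k2 : ℂ) (j l : Fin 3) {x y : V3} (h : y ≠ x) :
    pd l (fun w => c * ((Gk k1 ‖x - w‖ - Gk k2 ‖x - w‖) * ((x j - w j : ℝ) : ℂ))) y
      = -(c * ((G1 k1 ‖x - y‖ - G1 k2 ‖x - y‖) * ((x l - y l : ℝ):ℂ) * ((x j - y j : ℝ):ℂ)
            / (‖x - y‖ : ℂ)
          + (Gk k1 ‖x - y‖ - Gk k2 ‖x - y‖) * (if l = j then 1 else 0))) := by
  have hr : ‖x - y‖ ≠ 0 := norm_ne_zero_iff.mpr (sub_ne_zero.mpr (Ne.symm h))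
  have hn := norm_sub_right_hasFDerivAt x h
  have hA1 : HasFDerivAt (fun w : V3 => Gk k1 ‖x - w‖)
      ((ContinuousLinearMap.smulRight (1 : ℝ →L[ℝ] ℝ) (G1 k1 ‖x - y‖)).comp
        (-((‖x - y‖)⁻¹ • innerSL ℝ (x - y)))) y :=
    ((Gk_hasDerivAt k1 hr).hasFDerivAt).comp (g := Gk k1) y hn
  have hA2 : HasFDerivAt (fun w : V3 => Gk k2 ‖x - w‖)
      ((ContinuousLinearMap.smulRight (1 : ℝ →L[ℝ] ℝ) (G1 k2 ‖x - y‖)).comp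
        (-((‖x - y‖)⁻¹ • innerSL ℝ (x - y)))) y :=
    ((Gk_hasDerivAt k2 hr).hasFDerivAt).comp (g := Gk k2) y hn
  have hA := hA1.sub hA2
  have hB : HasFDerivAt (fun w : V3 => ((x j - w j : ℝ) : ℂ))
      (Complex.ofRealCLM.comp
        ((0 : V3 →L[ℝ] ℝ) - (EuclideanSpace.proj j : V3 →L[ℝ] ℝ))) y := by
    apply Complex.ofRealCLM.hasFDerivAt.comp y
    exact (hasFDerivAt_const (x j) y).sub (EuclideanSpace.proj j : V3 →L[ℝ] ℝ).hasFDerivAt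
  have hH := (hA.mul hB).const_mul c
  unfold pd
  rw [HasFDerivAt.fderiv (f := fun w => c * ((Gk k1 ‖x - w‖ - Gk k2 ‖x - w‖) * ((x j - w j : ℝ) : ℂ))) hH]
  have hinner : (innerSL ℝ (x - y)) (EuclideanSpace.single l (1:ℝ)) = x l - y l := by
    simp [EuclideanSpace.inner_single_right, PiLp.sub_apply]
  have hproj : (EuclideanSpace.proj l : V3 →L[ℝ] ℝ) (EuclideanSpace.single l (1:ℝ)) = 1 := by
    simp
  have hproj' : (EuclideanSpace.proj j : V3 →L[ℝ] ℝ) (EuclideanSpace.single l (1:ℝ))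
      = if l = j then 1 else 0 := by
    by_cases hlj : l = j
    · simp [hlj, EuclideanSpace.single_apply]
    · simp [EuclideanSpace.single_apply, hlj, Ne.symm hlj]
  simp only [ContinuousLinearMap.smul_apply, ContinuousLinearMap.add_apply,
    ContinuousLinearMap.sub_apply, ContinuousLinearMap.comp_apply,
    ContinuousLinearMap.neg_apply, ContinuousLinearMap.zero_apply,
    ContinuousLinearMap.smulRight_apply, ContinuousLinearMap.one_apply,
    Complex.ofRealCLM_apply, hinner, hproj', Complex.real_smul, smul_eq_mul, Pi.sub_apply]
  have hrc : (‖x - y‖ : ℂ) ≠ 0 := by exact_mod_cast hr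
  by_cases hlj : l = j
  · simp only [if_pos hlj]
    push_cast
    field_simp
    ring
  · simp only [if_neg hlj]
    push_cast
    field_simp
    ring

lemma lap_id (k : ℂ) {t : ℝ} (ht : t ≠ 0) :
    G1 k t * (t:ℂ) + 3 * Gk k t = -(k^2) * Fk k t := by
  have ht' : (t:ℂ) ≠ 0 := by exact_mod_cast ht
  have hpi : (Real.pi:ℂ) ≠ 0 := pi_ne
  have h4 : (4:ℂ) ≠ 0 := by norm_num
  have d1 : 4 * (Real.pi:ℂ) * (t:ℂ)^4 ≠ 0 :=
    mul_ne_zero (mul_ne_zero h4 hpi) (pow_ne_zero _ ht')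
  have d2 : 4 * (Real.pi:ℂ) * (t:ℂ)^3 ≠ 0 :=
    mul_ne_zero (mul_ne_zero h4 hpi) (pow_ne_zero _ ht')
  have d3 : (((4 * Real.pi * t : ℝ)) : ℂ) ≠ 0 := by
    push_cast
    exact mul_ne_zero (mul_ne_zero h4 hpi) ht'
  unfold G1 Gk Fk
  rw [div_mul_eq_mul_div, ← mul_div_assoc, ← mul_div_assoc, div_add_div _ _ d1 d2,
    div_eq_div_iff (mul_ne_zero d1 d2) d3]
  push_cast
  ring

lemma eps_contract (A : Fin 3 → Fin 3 → ℂ) (hA : ∀ a b, A a b = A b a) (m : Fin 3) :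
    ∑ l, ∑ n, ((eps m l n : ℝ) : ℂ) * A l n = 0 := by
  fin_cases m
  · simp [Fin.sum_univ_three, eps]
    rw [hA 1 2]; ring
  · simp [Fin.sum_univ_three, eps]
    rw [hA 0 2]; ring
  · simp [Fin.sum_univ_three, eps]
    rw [hA 0 1]; ring

def Tm (k1 k2 : ℂ) (x y : V3) (l j : Fin 3) : ℂ :=
  (G1 k1 ‖x - y‖ - G1 k2 ‖x - y‖) * ((x l - y l : ℝ):ℂ) * ((x j - y j : ℝ):ℂ)
      / (‖x - y‖ : ℂ)
    + (Gk k1 ‖x - y‖ - Gk k2 ‖x - y‖) * (if l = j then 1 else 0)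

lemma Tm_symm (k1 k2 : ℂ) (x y : V3) (a b : Fin 3) :
    Tm k1 k2 x y a b = Tm k1 k2 x y b a := by
  unfold Tm
  rw [show (if a = b then (1:ℂ) else 0) = (if b = a then (1:ℂ) else 0) by simp [eq_comm]]
  ring

lemma Tm_diag (k1 k2 : ℂ) {x y : V3} (h : y ≠ x) :
    Tm k1 k2 x y 0 0 + Tm k1 k2 x y 1 1 + Tm k1 k2 x y 2 2
      = -(k1^2 * gammaK k1 x y - k2^2 * gammaK k2 x y) := by
  have hr : ‖x - y‖ ≠ 0 := norm_ne_zero_iff.mpr (sub_ne_zero.mpr (Ne.symm h))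
  have hrc : ((‖x - y‖ : ℝ):ℂ) ≠ 0 := by exact_mod_cast hr
  have hsqR : (x 0 - y 0)^2 + (x 1 - y 1)^2 + (x 2 - y 2)^2 = ‖x - y‖^2 := by
    rw [EuclideanSpace.norm_sq_eq]
    simp [Fin.sum_univ_three, sq_abs]
  have hsq : ((x 0 - y 0 : ℝ):ℂ)^2 + ((x 1 - y 1 : ℝ):ℂ)^2 + ((x 2 - y 2 : ℝ):ℂ)^2
      = ((‖x - y‖ : ℝ):ℂ)^2 := by exact_mod_cast hsqR
  have l1 := lap_id k1 hr
  have l2 := lap_id k2 hr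
  rw [gammaK_eq, gammaK_eq]
  unfold Tm
  simp only [if_pos rfl]
  field_simp
  push_cast at hsq ⊢
  linear_combination (G1 k1 ‖x - y‖ - G1 k2 ‖x - y‖) * hsq
    + ((‖x - y‖ : ℝ):ℂ) * l1 - ((‖x - y‖ : ℝ):ℂ) * l2

/-- Regularized expression for the traction of `E₂₁` in `y`:
`T(∂_y,ν)E₂₁ = (iωη/(k₁²−k₂²)) ν (k₁²γ_{k₁} − k₂²γ_{k₂})
− (2iμωη/((k₁²−k₂²)(λ+2μ))) M(∂_y,ν)(∇_y[γ_{k₁}−γ_{k₂}])`, componentwise,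
with all differentiations in `y`. -/
theorem stmt_14 (lam μ ω η : ℝ) (hμ : 0 < μ) (hlam : 0 < lam + 2 * μ)
    (hω : 0 < ω) (k1 k2 : ℂ) (hne : k1 ^ 2 ≠ k2 ^ 2)
    (ν : Fin 3 → ℝ) (x y : V3) (hxy : x ≠ y) (i : Fin 3) :
    traction lam μ ν (fun j => fun z => E21 lam μ ω η k1 k2 j x z) i y
      = (Complex.I * (ω : ℂ) * (η : ℂ) / (k1 ^ 2 - k2 ^ 2)) * (ν i : ℂ) *
          (k1 ^ 2 * gammaK k1 x y - k2 ^ 2 * gammaK k2 x y)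
        - (2 * Complex.I * (μ : ℂ) * (ω : ℂ) * (η : ℂ) /
            ((k1 ^ 2 - k2 ^ 2) * ((lam : ℂ) + 2 * (μ : ℂ)))) *
          gunterM ν (fun j => pd j (fun z => gammaK k1 x z - gammaK k2 x z)) i y := by
  have hyx : y ≠ x := hxy.symm
  have hr : ‖x - y‖ ≠ 0 := norm_ne_zero_iff.mpr (sub_ne_zero.mpr hxy)
  have hev : ∀ᶠ z in nhds y, z ≠ x := eventually_ne_nhds hyx
  have hk : (k1^2 - k2^2) ≠ 0 := sub_ne_zero.mpr hne
  have hlamc : ((lam:ℂ) + 2*(μ:ℂ)) ≠ 0 := by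
    have hR : (lam + 2*μ : ℝ) ≠ 0 := ne_of_gt hlam
    exact_mod_cast hR
  set CE : ℂ := Complex.I * (ω:ℂ) * (η:ℂ) / ((k1^2 - k2^2) * ((lam:ℂ) + 2*(μ:ℂ))) with hCE
  have h1 : ∀ l j : Fin 3, pd l (fun z => E21 lam μ ω η k1 k2 j x z) y
      = -(CE * Tm k1 k2 x y l j) := by
    intro l j
    have hev1 : (fun z => E21 lam μ ω η k1 k2 j x z) =ᶠ[nhds y]
        (fun z => CE * ((Gk k1 ‖x - z‖ - Gk k2 ‖x - z‖) * ((x j - z j : ℝ):ℂ))) := by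
      filter_upwards [hev] with z hz
      unfold E21
      rw [pd_fst k1 k2 j hz, hCE]
    rw [pd_congr hev1 l, pd_h CE k1 k2 j l hyx]
    unfold Tm
    rfl
  have h2 : ∀ a b : Fin 3, pd a (pd b (fun z => gammaK k1 x z - gammaK k2 x z)) y
      = Tm k1 k2 x y a b := by
    intro a b
    have hev2 : (pd b (fun z => gammaK k1 x z - gammaK k2 x z)) =ᶠ[nhds y]
        (fun z => (-1:ℂ) * ((Gk k1 ‖x - z‖ - Gk k2 ‖x - z‖) * ((x b - z b : ℝ):ℂ))) := by
      filter_upwards [hev] with z hz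
      rw [pd_snd k1 k2 b hz]
      ring
    rw [pd_congr hev2 a, pd_h (-1) k1 k2 b a hyx]
    unfold Tm
    ring
  have hc : ∀ m : Fin 3, ∑ l, ∑ n, ((eps m l n : ℝ):ℂ) * -(CE * Tm k1 k2 x y l n) = 0 := by
    intro m
    exact eps_contract (fun a b => -(CE * Tm k1 k2 x y a b))
      (fun a b => by
        show -(CE * Tm k1 k2 x y a b) = -(CE * Tm k1 k2 x y b a)
        rw [Tm_symm]) m
  have hco1 : Complex.I * (ω:ℂ) * (η:ℂ) / (k1^2 - k2^2) = CE * ((lam:ℂ) + 2*(μ:ℂ)) := by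
    rw [hCE]
    field_simp
  have hco2 : 2 * Complex.I * (μ:ℂ) * (ω:ℂ) * (η:ℂ) / ((k1^2 - k2^2) * ((lam:ℂ) + 2*(μ:ℂ)))
      = 2 * (μ:ℂ) * CE := by
    rw [hCE]
    ring
  have hdiag := Tm_diag k1 k2 hyx
  have e0 := Tm_symm k1 k2 x y i 0
  have e1 := Tm_symm k1 k2 x y i 1
  have e2 := Tm_symm k1 k2 x y i 2
  simp only [traction, dirD, vdiv, curl, crossR, gunterM, h1, h2]
  simp only [hc, mul_zero, Finset.sum_const_zero, add_zero]
  rw [hco1, hco2]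
  simp only [Fin.sum_univ_three]
  linear_combination (2*(μ:ℂ)*CE*((ν 0 : ℝ):ℂ)) * e0 + (2*(μ:ℂ)*CE*((ν 1 : ℝ):ℂ)) * e1
    + (2*(μ:ℂ)*CE*((ν 2 : ℝ):ℂ)) * e2 - CE*((lam:ℂ)+2*(μ:ℂ))*((ν i : ℝ):ℂ) * hdiag
end
end

section
/- Assume k₁² ≠ k₂² and the characteristic relations k₁² + k₂² = q(1+ε) + k_p² and k₁² k₂² = q k_p², where ε := γηκ/(λ+2μ). Fix y ∈ ℝ³ and j ∈ {1,2,3}, and set u(x) := (j-th column of E₁₁(x,y)) and p(x) := (j-th component of E₂₁(x,y)). Then for every x ≠ y, the Biot system holds: μΔu(x) + (λ+μ)∇(∇·u(x)) + ρω²u(x) − γ∇p(x) = 0 and Δp(x) + q p(x) + iωη ∇·u(x) = 0. -/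
noncomputable section

open scoped BigOperators

set_option maxHeartbeats 4000000

namespace Biot
open Complex

def nf (y : V3) : V3 → ℝ := fun x => ∑ l, (x l - y l) * (x l - y l)

def pj (l : Fin 3) : V3 →L[ℝ] ℝ := EuclideanSpace.proj l

def Ln (y x : V3) : V3 →L[ℝ] ℝ := ∑ l, (2 * (x l - y l)) • (pj l)

lemma hasFDerivAt_nf (y x : V3) : HasFDerivAt (nf y) (Ln y x) x := by
  have h : ∀ l : Fin 3, HasFDerivAt (fun z : V3 => (z l - y l) * (z l - y l))
      ((2 * (x l - y l)) • (pj l)) x := by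
    intro l
    have h1 : HasFDerivAt (fun z : V3 => z l - y l) (pj l) x :=
      ((pj l).hasFDerivAt).sub_const (y l)
    rw [two_mul, add_smul]
    exact h1.mul h1
  exact HasFDerivAt.fun_sum (fun l _ => h l)

lemma sqrt_nf (y x : V3) : Real.sqrt (nf y x) = ‖x - y‖ := by
  rw [EuclideanSpace.norm_eq]
  congr 1
  refine Finset.sum_congr rfl fun l _ => ?_
  simp [nf]
  ring

lemma nf_pos {y x : V3} (hxy : x ≠ y) : 0 < nf y x := by
  have h1 : 0 < Real.sqrt (nf y x) := by
    rw [sqrt_nf]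
    simpa [sub_ne_zero] using norm_pos_iff.mpr (sub_ne_zero.mpr hxy)
  exact Real.sqrt_pos.mp h1

lemma Ln_apply (y x : V3) (i : Fin 3) :
    Ln y x (EuclideanSpace.single i (1 : ℝ)) = 2 * (x i - y i) := by
  simp [Ln, pj, PiLp.proj_apply, EuclideanSpace.single_apply]





def rr (k : ℂ) : ℕ → ℂ → ℂ
  | 0 => fun z => 1 / z
  | 1 => fun z => (I * k * z - 1) / (2 * z ^ 3)
  | 2 => fun z => (-(k ^ 2) * z ^ 2 - 3 * I * k * z + 3) / (4 * z ^ 5)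
  | 3 => fun z => (-(I * k ^ 3) * z ^ 3 + 6 * k ^ 2 * z ^ 2 + 15 * I * k * z - 15) / (8 * z ^ 7)
  | 4 => fun z => (k ^ 4 * z ^ 4 + 10 * I * k ^ 3 * z ^ 3 - 45 * k ^ 2 * z ^ 2 - 105 * I * k * z
      + 105) / (16 * z ^ 9)
  | _ => fun _ => 0

lemma rr_deriv (k : ℂ) (m : ℕ) (hm : m < 4) {z : ℂ} (hz : z ≠ 0) :
    HasDerivAt (rr k m) (2 * z * rr k (m + 1) z - I * k * rr k m z) z := by
  have hz3 : z ^ 3 ≠ 0 := pow_ne_zero _ hz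
  have hz5 : z ^ 5 ≠ 0 := pow_ne_zero _ hz
  have hz7 : z ^ 7 ≠ 0 := pow_ne_zero _ hz
  interval_cases m
  · have h := (hasDerivAt_const z (1 : ℂ)).div (hasDerivAt_id z) hz
    have h2 : HasDerivAt (fun w : ℂ => 1 / w)
        (2 * z * rr k (0 + 1) z - I * k * rr k 0 z) z := by
      refine h.congr_deriv (Eq.symm ?_)
      show 2 * z * ((I * k * z - 1) / (2 * z ^ 3)) - I * k * (1 / z) = _
      simp only [id, Pi.add_apply, Pi.sub_apply]
      field_simp
      ring_nf
      try simp only [Complex.I_sq]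
      try ring
    exact h2
  · have h := (((hasDerivAt_id z).const_mul (I * k)).sub_const 1).div
      ((hasDerivAt_pow 3 z).const_mul (2 : ℂ)) (by simpa using hz3)
    have h2 : HasDerivAt (fun w : ℂ => (I * k * w - 1) / (2 * w ^ 3))
        (2 * z * rr k (1 + 1) z - I * k * rr k 1 z) z := by
      refine h.congr_deriv (Eq.symm ?_)
      show 2 * z * ((-(k ^ 2) * z ^ 2 - 3 * I * k * z + 3) / (4 * z ^ 5))
        - I * k * ((I * k * z - 1) / (2 * z ^ 3)) = _
      simp only [id, Pi.add_apply, Pi.sub_apply]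
      field_simp
      ring_nf
      try simp only [Complex.I_sq]
      try ring
    exact h2
  · have h := ((((hasDerivAt_pow 2 z).const_mul (-(k ^ 2))).sub
      ((hasDerivAt_id z).const_mul (3 * I * k))).add_const 3).div
      ((hasDerivAt_pow 5 z).const_mul (4 : ℂ)) (by simpa using hz5)
    have h2 : HasDerivAt (fun w : ℂ => (-(k ^ 2) * w ^ 2 - 3 * I * k * w + 3) / (4 * w ^ 5))
        (2 * z * rr k (2 + 1) z - I * k * rr k 2 z) z := by
      refine h.congr_deriv (Eq.symm ?_)
      show 2 * z * ((-(I * k ^ 3) * z ^ 3 + 6 * k ^ 2 * z ^ 2 + 15 * I * k * z - 15) / (8 * z ^ 7))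
        - I * k * ((-(k ^ 2) * z ^ 2 - 3 * I * k * z + 3) / (4 * z ^ 5)) = _
      simp only [id, Pi.add_apply, Pi.sub_apply]
      field_simp
      ring_nf
      try simp only [Complex.I_sq]
      try ring
    exact h2
  · have h := (((((hasDerivAt_pow 3 z).const_mul (-(I * k ^ 3))).add
      ((hasDerivAt_pow 2 z).const_mul (6 * k ^ 2))).add
      ((hasDerivAt_id z).const_mul (15 * I * k))).sub_const 15).div
      ((hasDerivAt_pow 7 z).const_mul (8 : ℂ)) (by simpa using hz7)
    have h2 : HasDerivAt (fun w : ℂ =>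
        (-(I * k ^ 3) * w ^ 3 + 6 * k ^ 2 * w ^ 2 + 15 * I * k * w - 15) / (8 * w ^ 7))
        (2 * z * rr k (3 + 1) z - I * k * rr k 3 z) z := by
      refine h.congr_deriv (Eq.symm ?_)
      show 2 * z * ((k ^ 4 * z ^ 4 + 10 * I * k ^ 3 * z ^ 3 - 45 * k ^ 2 * z ^ 2 - 105 * I * k * z
          + 105) / (16 * z ^ 9))
        - I * k * ((-(I * k ^ 3) * z ^ 3 + 6 * k ^ 2 * z ^ 2 + 15 * I * k * z - 15) / (8 * z ^ 7))
          = _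
      simp only [id, Pi.add_apply, Pi.sub_apply]
      field_simp
      ring_nf
      try simp only [Complex.I_sq]
      try ring
    exact h2

def gg (k : ℂ) (m : ℕ) (s : ℝ) : ℂ :=
  Complex.exp (I * k * (Real.sqrt s : ℂ)) / (4 * (Real.pi : ℂ)) * rr k m ((Real.sqrt s : ℝ) : ℂ)

lemma gg_deriv (k : ℂ) (m : ℕ) (hm : m < 4) {s : ℝ} (hs : 0 < s) :
    HasDerivAt (gg k m) (gg k (m + 1) s) s := by
  set w := Real.sqrt s with hw
  have hwpos : 0 < w := Real.sqrt_pos.mpr hs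
  have hz : ((w : ℂ)) ≠ 0 := by exact_mod_cast hwpos.ne'
  have hsq : HasDerivAt Real.sqrt (1 / (2 * w)) s := Real.hasDerivAt_sqrt hs.ne'
  have hcast : HasDerivAt (fun t : ℝ => (t : ℂ)) 1 w := by
    simpa using (hasDerivAt_id w).ofReal_comp
  have hexp : HasDerivAt (fun t : ℝ => Complex.exp (I * k * (t : ℂ)))
      (Complex.exp (I * k * (w : ℂ)) * (I * k)) w := by
    have := (hcast.const_mul (I * k)).cexp
    simpa using this
  have hrrR : HasDerivAt (fun t : ℝ => rr k m ((t : ℝ) : ℂ))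
      (2 * (w : ℂ) * rr k (m + 1) (w : ℂ) - I * k * rr k m (w : ℂ)) w :=
    (rr_deriv k m hm hz).comp_ofReal
  have hh := (hexp.div_const (4 * (Real.pi : ℂ))).mul hrrR
  have hcomp := hh.scomp s hsq
  have heq : (1 / (2 * w)) • (Complex.exp (I * k * (w : ℂ)) * (I * k) / (4 * (Real.pi : ℂ))
        * rr k m (w : ℂ)
      + Complex.exp (I * k * (w : ℂ)) / (4 * (Real.pi : ℂ))
        * (2 * (w : ℂ) * rr k (m + 1) (w : ℂ) - I * k * rr k m (w : ℂ)))
      = gg k (m + 1) s := by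
    rw [Complex.real_smul]
    unfold gg
    rw [← hw]
    push_cast
    have h4 : (4 : ℂ) * (Real.pi : ℂ) ≠ 0 := by
      simp [Real.pi_ne_zero]
    field_simp
    ring
  rw [heq] at hcomp
  exact hcomp

lemma gg_ode (k : ℂ) (m : ℕ) (hm : m < 3) {s : ℝ} (hs : 0 < s) :
    4 * (s : ℂ) * gg k (m + 2) s + (4 * (m : ℂ) + 6) * gg k (m + 1) s = -k ^ 2 * gg k m s := by
  set w := Real.sqrt s with hw
  have hwpos : 0 < w := Real.sqrt_pos.mpr hs
  have hz : ((w : ℂ)) ≠ 0 := by exact_mod_cast hwpos.ne'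
  have hsw : (s : ℂ) = (w : ℂ) ^ 2 := by
    rw [hw]
    norm_cast
    exact (Real.sq_sqrt hs.le).symm
  have hexp : Complex.exp (I * k * (w : ℂ)) ≠ 0 := Complex.exp_ne_zero _
  have hpi : ((Real.pi : ℝ) : ℂ) ≠ 0 := Complex.ofReal_ne_zero.mpr Real.pi_ne_zero
  interval_cases m <;>
  · unfold gg
    rw [← hw, hsw]
    simp only [rr]
    field_simp [hz, hpi]
    ring_nf
    try simp only [Complex.I_sq]
    try ring



def cw (y : V3) (j : Fin 3) : V3 → ℂ := fun x => ((x j - y j : ℝ) : ℂ)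

def Ph (k : ℂ) (y : V3) (m : ℕ) : V3 → ℂ := fun x => gg k m (nf y x)

def dl (i j : Fin 3) : ℂ := if i = j then 1 else 0

def cwD (j : Fin 3) : V3 →L[ℝ] ℂ := Complex.ofRealCLM.comp (pj j)

def PhD (k : ℂ) (y : V3) (m : ℕ) (x : V3) : V3 →L[ℝ] ℂ :=
  (ContinuousLinearMap.smulRight (1 : ℝ →L[ℝ] ℝ) (gg k (m + 1) (nf y x))).comp (Ln y x)

lemma hasFDerivAt_cw (y : V3) (j : Fin 3) (x : V3) : HasFDerivAt (cw y j) (cwD j) x := by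
  have h1 : HasFDerivAt (fun z : V3 => z j - y j) (pj j) x :=
    ((pj j).hasFDerivAt).sub_const (y j)
  exact (Complex.ofRealCLM.hasFDerivAt).comp x h1

lemma hasFDerivAt_Ph {k : ℂ} {y : V3} {m : ℕ} (hm : m < 4) {x : V3} (hxy : x ≠ y) :
    HasFDerivAt (Ph k y m) (PhD k y m x) x := by
  have h := ((gg_deriv k m hm (nf_pos hxy)).hasFDerivAt).comp x (hasFDerivAt_nf y x)
  exact h

lemma diff_cw {y : V3} {j : Fin 3} {x : V3} : DifferentiableAt ℝ (cw y j) x :=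
  (hasFDerivAt_cw y j x).differentiableAt

lemma diff_Ph {k : ℂ} {y : V3} {m : ℕ} (hm : m < 4) {x : V3} (hxy : x ≠ y) :
    DifferentiableAt ℝ (Ph k y m) x :=
  (hasFDerivAt_Ph hm hxy).differentiableAt

lemma cwD_apply (j i : Fin 3) : cwD j (EuclideanSpace.single i (1 : ℝ)) = dl i j := by
  simp only [cwD, ContinuousLinearMap.coe_comp', Function.comp_apply, Complex.ofRealCLM_apply,
    pj, PiLp.proj_apply, EuclideanSpace.single_apply, dl]
  by_cases h : i = j
  · simp [h]
  · simp [h, Ne.symm h]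

lemma PhD_apply (k : ℂ) (y : V3) (m : ℕ) (x : V3) (i : Fin 3) :
    PhD k y m x (EuclideanSpace.single i (1 : ℝ)) = 2 * cw y i x * Ph k y (m + 1) x := by
  simp only [PhD, ContinuousLinearMap.coe_comp', Function.comp_apply,
    ContinuousLinearMap.smulRight_apply, ContinuousLinearMap.one_apply, Ln_apply]
  rw [Complex.real_smul]
  unfold cw Ph
  push_cast
  ring

lemma pd_Ph {k : ℂ} {y : V3} {m : ℕ} (hm : m < 4) {x : V3} (hxy : x ≠ y) (i : Fin 3) :
    pd i (Ph k y m) x = 2 * cw y i x * Ph k y (m + 1) x := by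
  show fderiv ℝ (Ph k y m) x (EuclideanSpace.single i (1 : ℝ)) = _
  rw [(hasFDerivAt_Ph hm hxy).fderiv, PhD_apply]

lemma pd_cw {y : V3} {j : Fin 3} {x : V3} (i : Fin 3) :
    pd i (cw y j) x = dl i j := by
  show fderiv ℝ (cw y j) x (EuclideanSpace.single i (1 : ℝ)) = _
  rw [(hasFDerivAt_cw y j x).fderiv, cwD_apply]

lemma pd_congr {y : V3} {f g : V3 → ℂ} (hfg : ∀ z, z ≠ y → f z = g z) {x : V3} (hxy : x ≠ y)
    (i : Fin 3) : pd i f x = pd i g x := by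
  show fderiv ℝ f x _ = fderiv ℝ g x _
  congr 1
  apply Filter.EventuallyEq.fderiv_eq
  have hopen : {z : V3 | z ≠ y} ∈ nhds x := isOpen_ne.mem_nhds hxy
  exact Filter.eventuallyEq_of_mem hopen hfg

lemma pd4 {f g h e : V3 → ℂ} {x : V3} (a b c d : ℂ) (hf : DifferentiableAt ℝ f x)
    (hg : DifferentiableAt ℝ g x) (hh : DifferentiableAt ℝ h x) (he : DifferentiableAt ℝ e x)
    (i : Fin 3) :
    pd i (fun z => a * f z + b * g z + c * h z + d * e z) x
      = a * pd i f x + b * pd i g x + c * pd i h x + d * pd i e x := by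
  have H : HasFDerivAt (fun z => a * f z + b * g z + c * h z + d * e z)
      (a • fderiv ℝ f x + b • fderiv ℝ g x + c • fderiv ℝ h x + d • fderiv ℝ e x) x :=
    (((hf.hasFDerivAt.const_mul a).add (hg.hasFDerivAt.const_mul b)).add
      (hh.hasFDerivAt.const_mul c)).add (he.hasFDerivAt.const_mul d)
  show fderiv ℝ _ x _ = _
  rw [H.fderiv]
  simp [pd]


variable {k : ℂ} {y : V3} {x : V3}

def D1 (k : ℂ) (y : V3) (j : Fin 3) : V3 → ℂ := fun x => 2 * cw y j x * Ph k y 1 x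

def D2 (k : ℂ) (y : V3) (i j : Fin 3) : V3 → ℂ := fun x =>
  4 * cw y i x * cw y j x * Ph k y 2 x + 2 * dl i j * Ph k y 1 x

def D3 (k : ℂ) (y : V3) (l i j : Fin 3) : V3 → ℂ := fun x =>
  8 * cw y l x * cw y i x * cw y j x * Ph k y 3 x + 4 * dl l i * cw y j x * Ph k y 2 x
    + 4 * dl l j * cw y i x * Ph k y 2 x + 4 * dl i j * cw y l x * Ph k y 2 x

def D4 (k : ℂ) (y : V3) (m l i j : Fin 3) : V3 → ℂ := fun x =>
  16 * cw y m x * cw y l x * cw y i x * cw y j x * Ph k y 4 x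
    + 8 * (dl m l * cw y i x * cw y j x + dl m i * cw y l x * cw y j x
        + dl m j * cw y l x * cw y i x + dl l i * cw y m x * cw y j x
        + dl l j * cw y m x * cw y i x + dl i j * cw y m x * cw y l x) * Ph k y 3 x
    + 4 * (dl m l * dl i j + dl m i * dl l j + dl m j * dl l i) * Ph k y 2 x

lemma diff_D1 (hxy : x ≠ y) {j : Fin 3} : DifferentiableAt ℝ (D1 k y j) x :=
  (diff_cw.const_mul 2).mul (diff_Ph (by norm_num) hxy)

lemma diff_D2 (hxy : x ≠ y) {i j : Fin 3} : DifferentiableAt ℝ (D2 k y i j) x :=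
  (((diff_cw.const_mul 4).mul diff_cw).mul (diff_Ph (by norm_num) hxy)).add
    ((diff_Ph (by norm_num) hxy).const_mul (2 * dl i j))

lemma diff_D3 (hxy : x ≠ y) {l i j : Fin 3} : DifferentiableAt ℝ (D3 k y l i j) x := by
  have h2 : DifferentiableAt ℝ (Ph k y 2) x := diff_Ph (by norm_num) hxy
  have h3 : DifferentiableAt ℝ (Ph k y 3) x := diff_Ph (by norm_num) hxy
  exact (((((((diff_cw.const_mul 8).mul diff_cw).mul diff_cw).mul h3).add
    (((diff_cw (j := j)).const_mul (4 * dl l i)).mul h2)).add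
    (((diff_cw (j := i)).const_mul (4 * dl l j)).mul h2)).add
    (((diff_cw (j := l)).const_mul (4 * dl i j)).mul h2))

lemma pd_D1 (hxy : x ≠ y) (i j : Fin 3) : pd i (D1 k y j) x = D2 k y i j x := by
  have hc := hasFDerivAt_cw y j x
  have hP := hasFDerivAt_Ph (k := k) (m := 1) (by norm_num) hxy
  have H : HasFDerivAt (fun z => 2 * cw y j z * Ph k y 1 z) _ x := (hc.const_mul (2 : ℂ)).mul hP
  show fderiv ℝ (fun z => 2 * cw y j z * Ph k y 1 z) x (EuclideanSpace.single i (1 : ℝ)) = _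
  rw [H.fderiv]
  simp only [ContinuousLinearMap.add_apply, ContinuousLinearMap.coe_smul', Pi.smul_apply,
    PhD_apply, cwD_apply, smul_eq_mul]
  unfold D2
  ring

lemma pd_D2 (hxy : x ≠ y) (m i j : Fin 3) : pd m (D2 k y i j) x = D3 k y m i j x := by
  have hci := hasFDerivAt_cw y i x
  have hcj := hasFDerivAt_cw y j x
  have hP1 := hasFDerivAt_Ph (k := k) (y := y) (m := 1) (by norm_num) hxy
  have hP2 := hasFDerivAt_Ph (k := k) (y := y) (m := 2) (by norm_num) hxy
  have H : HasFDerivAt (fun z => 4 * cw y i z * cw y j z * Ph k y 2 z + 2 * dl i j * Ph k y 1 z) _ x := ((((hci.const_mul (4 : ℂ)).mul hcj).mul hP2).add (hP1.const_mul (2 * dl i j)))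
  show fderiv ℝ (fun z => 4 * cw y i z * cw y j z * Ph k y 2 z + 2 * dl i j * Ph k y 1 z) x
    (EuclideanSpace.single m (1 : ℝ)) = _
  rw [H.fderiv]
  simp only [ContinuousLinearMap.add_apply, ContinuousLinearMap.coe_smul', Pi.smul_apply,
    PhD_apply, cwD_apply, smul_eq_mul, Pi.mul_apply]
  unfold D3
  ring

lemma pd_D3 (hxy : x ≠ y) (m l i j : Fin 3) : pd m (D3 k y l i j) x = D4 k y m l i j x := by
  have hcl := hasFDerivAt_cw y l x
  have hci := hasFDerivAt_cw y i x
  have hcj := hasFDerivAt_cw y j x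
  have hP2 := hasFDerivAt_Ph (k := k) (y := y) (m := 2) (by norm_num) hxy
  have hP3 := hasFDerivAt_Ph (k := k) (y := y) (m := 3) (by norm_num) hxy
  have H : HasFDerivAt (fun z =>
        8 * cw y l z * cw y i z * cw y j z * Ph k y 3 z + 4 * dl l i * cw y j z * Ph k y 2 z
          + 4 * dl l j * cw y i z * Ph k y 2 z + 4 * dl i j * cw y l z * Ph k y 2 z) _ x :=
    (((((((hcl.const_mul (8 : ℂ)).mul hci).mul hcj).mul hP3).add
    ((hcj.const_mul (4 * dl l i)).mul hP2)).add
    ((hci.const_mul (4 * dl l j)).mul hP2)).add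
    ((hcl.const_mul (4 * dl i j)).mul hP2))
  show fderiv ℝ (fun z =>
      8 * cw y l z * cw y i z * cw y j z * Ph k y 3 z + 4 * dl l i * cw y j z * Ph k y 2 z
        + 4 * dl l j * cw y i z * Ph k y 2 z + 4 * dl i j * cw y l z * Ph k y 2 z) x
    (EuclideanSpace.single m (1 : ℝ)) = _
  rw [H.fderiv]
  simp only [ContinuousLinearMap.add_apply, ContinuousLinearMap.coe_smul', Pi.smul_apply,
    PhD_apply, cwD_apply, smul_eq_mul, Pi.mul_apply]
  unfold D4
  ring


variable {k : ℂ} {y : V3} {x : V3}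

lemma dl_self (l : Fin 3) : dl l l = 1 := if_pos rfl

lemma cw_sq : cw y 0 x * cw y 0 x + cw y 1 x * cw y 1 x + cw y 2 x * cw y 2 x
    = ((nf y x : ℝ) : ℂ) := by
  unfold cw nf
  rw [Fin.sum_univ_three]
  push_cast
  ring

lemma dl_sum (j : Fin 3) : dl 0 j * cw y 0 x + dl 1 j * cw y 1 x + dl 2 j * cw y 2 x
    = cw y j x := by
  fin_cases j <;> simp [dl]

lemma dl_dot (i j : Fin 3) : dl 0 i * dl 0 j + dl 1 i * dl 1 j + dl 2 i * dl 2 j = dl i j := by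
  fin_cases i <;> fin_cases j <;> simp [dl]

lemma dlD1 (j : Fin 3) : dl 0 j * D1 k y 0 x + dl 1 j * D1 k y 1 x + dl 2 j * D1 k y 2 x
    = D1 k y j x := by
  fin_cases j <;> simp [dl]

lemma Ph_ode0 (hxy : x ≠ y) :
    4 * ((nf y x : ℝ) : ℂ) * Ph k y 2 x + 6 * Ph k y 1 x = -k ^ 2 * Ph k y 0 x := by
  unfold Ph
  have h := gg_ode k 0 (by norm_num) (nf_pos hxy)
  norm_num at h
  linear_combination h

lemma Ph_ode1 (hxy : x ≠ y) :
    4 * ((nf y x : ℝ) : ℂ) * Ph k y 3 x + 10 * Ph k y 2 x = -k ^ 2 * Ph k y 1 x := by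
  unfold Ph
  have h := gg_ode k 1 (by norm_num) (nf_pos hxy)
  norm_num at h
  linear_combination h

lemma Ph_ode2 (hxy : x ≠ y) :
    4 * ((nf y x : ℝ) : ℂ) * Ph k y 4 x + 14 * Ph k y 3 x = -k ^ 2 * Ph k y 2 x := by
  unfold Ph
  have h := gg_ode k 2 (by norm_num) (nf_pos hxy)
  norm_num at h
  linear_combination h

lemma contr2 (hxy : x ≠ y) :
    D2 k y 0 0 x + D2 k y 1 1 x + D2 k y 2 2 x = -k ^ 2 * Ph k y 0 x := by
  simp only [D2, dl_self]
  linear_combination Ph_ode0 (k := k) hxy + 4 * Ph k y 2 x * (cw_sq (y := y) (x := x))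

lemma contr3 (hxy : x ≠ y) (j : Fin 3) :
    D3 k y 0 0 j x + D3 k y 1 1 j x + D3 k y 2 2 j x = -k ^ 2 * D1 k y j x := by
  simp only [D3, D1, dl_self]
  linear_combination 2 * cw y j x * Ph_ode1 (k := k) hxy
    + 8 * Ph k y 3 x * cw y j x * (cw_sq (y := y) (x := x))
    + 8 * Ph k y 2 x * (dl_sum (y := y) (x := x) j)

lemma contr4 (hxy : x ≠ y) (i j : Fin 3) :
    D4 k y 0 0 i j x + D4 k y 1 1 i j x + D4 k y 2 2 i j x = -k ^ 2 * D2 k y i j x := by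
  simp only [D4, D2, dl_self]
  linear_combination 4 * cw y i x * cw y j x * Ph_ode2 (k := k) hxy + 2 * dl i j * Ph_ode1 (k := k) hxy
    + (16 * Ph k y 4 x * cw y i x * cw y j x + 8 * dl i j * Ph k y 3 x)
        * (cw_sq (y := y) (x := x))
    + 16 * Ph k y 3 x * cw y j x * (dl_sum (y := y) (x := x) i)
    + 16 * Ph k y 3 x * cw y i x * (dl_sum (y := y) (x := x) j)
    + 8 * Ph k y 2 x * (dl_dot i j)


lemma gamma_eq (k : ℂ) (y : V3) : ∀ x : V3, x ≠ y → gammaK k x y = Ph k y 0 x := by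
  intro x hxy
  have hs := sqrt_nf y x
  have hn : ‖x - y‖ ≠ 0 := norm_ne_zero_iff.mpr (sub_ne_zero.mpr hxy)
  have hnc : ((‖x - y‖ : ℝ) : ℂ) ≠ 0 := Complex.ofReal_ne_zero.mpr hn
  have hpi : ((Real.pi : ℝ) : ℂ) ≠ 0 := Complex.ofReal_ne_zero.mpr Real.pi_ne_zero
  unfold gammaK Ph gg
  rw [hs]
  simp only [rr]
  push_cast
  field_simp

lemma diff_gamma (k : ℂ) {y x : V3} (hxy : x ≠ y) :
    DifferentiableAt ℝ (fun z => gammaK k z y) x := by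
  have hev : (fun z => gammaK k z y) =ᶠ[nhds x] Ph k y 0 :=
    Filter.eventuallyEq_of_mem (isOpen_ne.mem_nhds hxy) (fun z hz => gamma_eq k y z hz)
  exact DifferentiableAt.congr_of_eventuallyEq (diff_Ph (m := 0) (by norm_num) hxy) hev

lemma pd_sub {f g : V3 → ℂ} {x : V3} (hf : DifferentiableAt ℝ f x)
    (hg : DifferentiableAt ℝ g x) (i : Fin 3) :
    pd i (fun z => f z - g z) x = pd i f x - pd i g x := by
  have H : HasFDerivAt (fun z => f z - g z) (fderiv ℝ f x - fderiv ℝ g x) x :=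
    hf.hasFDerivAt.sub hg.hasFDerivAt
  show fderiv ℝ _ x _ = _
  rw [H.fderiv]
  simp [pd]

lemma pd_gamma_sub (kA kB : ℂ) {y x : V3} (hxy : x ≠ y) (j : Fin 3) :
    pd j (fun w => gammaK kA w y - gammaK kB w y) x = D1 kA y j x - D1 kB y j x := by
  rw [pd_sub (diff_gamma kA hxy) (diff_gamma kB hxy) j]
  rw [pd_congr (gamma_eq kA y) hxy j, pd_congr (gamma_eq kB y) hxy j]
  rw [pd_Ph (by norm_num) hxy j, pd_Ph (by norm_num) hxy j]
  rfl

lemma pdpd_gamma_sub (kA kB : ℂ) {y x : V3} (hxy : x ≠ y) (i j : Fin 3) :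
    pd i (pd j (fun w => gammaK kA w y - gammaK kB w y)) x
      = D2 kA y i j x - D2 kB y i j x := by
  rw [pd_congr (fun z hz => pd_gamma_sub kA kB hz j) hxy i]
  rw [pd_sub (diff_D1 hxy) (diff_D1 hxy) i]
  rw [pd_D1 hxy i j, pd_D1 hxy i j]


end Biot


/-- For each column index `j`, the pair `u = (E₁₁(·,y))_{·j}`,
`p = (E₂₁(·,y))_j` satisfies the Biot system of linearized thermoelasticity
away from the source point. -/
theorem stmt_17 (lam μ ρ ω κ η gam : ℝ) (hμ : 0 < μ) (hlam : 0 < lam + 2 * μ)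
    (hρ : 0 < ρ) (hω : 0 < ω) (hκ : 0 < κ) (q ks kp k1 k2 : ℂ)
    (hq : q = Complex.I * (ω : ℂ) / (κ : ℂ))
    (hks : ks = ((ω * Real.sqrt (ρ / μ) : ℝ) : ℂ))
    (hkp : kp = ((ω * Real.sqrt (ρ / (lam + 2 * μ)) : ℝ) : ℂ))
    (hne : k1 ^ 2 ≠ k2 ^ 2)
    (hchar1 : k1 ^ 2 + k2 ^ 2
      = q * (1 + ((gam * η * κ / (lam + 2 * μ) : ℝ) : ℂ)) + kp ^ 2)
    (hchar2 : k1 ^ 2 * k2 ^ 2 = q * kp ^ 2)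
    (y : V3) (j : Fin 3) (x : V3) (hxy : x ≠ y) :
    (∀ i : Fin 3,
      (μ : ℂ) * lap (fun z => E11 μ ρ ω ks kp k1 k2 i j z y) x
        + ((lam : ℂ) + (μ : ℂ)) *
          pd i (fun z => ∑ l, pd l (fun w => E11 μ ρ ω ks kp k1 k2 l j w y) z) x
        + (ρ : ℂ) * (ω : ℂ) ^ 2 * E11 μ ρ ω ks kp k1 k2 i j x y
        - (gam : ℂ) * pd i (fun z => E21 lam μ ω η k1 k2 j z y) x = 0)
    ∧ lap (fun z => E21 lam μ ω η k1 k2 j z y) x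
        + q * E21 lam μ ω η k1 k2 j x y
        + Complex.I * (ω : ℂ) * (η : ℂ) *
          (∑ l, pd l (fun w => E11 μ ρ ω ks kp k1 k2 l j w y) x) = 0 := by
  have hl2R : lam + 2 * μ ≠ 0 := ne_of_gt hlam
  have hMc : (μ : ℂ) ≠ 0 := Complex.ofReal_ne_zero.mpr (ne_of_gt hμ)
  have hRc : (ρ : ℂ) * (ω : ℂ) ^ 2 ≠ 0 :=
    mul_ne_zero (Complex.ofReal_ne_zero.mpr (ne_of_gt hρ))
      (pow_ne_zero _ (Complex.ofReal_ne_zero.mpr (ne_of_gt hω)))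
  have hL2 : (lam : ℂ) + 2 * (μ : ℂ) ≠ 0 := by exact_mod_cast hl2R
  have hks2 : (μ : ℂ) * ks ^ 2 = (ρ : ℂ) * (ω : ℂ) ^ 2 := by
    rw [hks]
    have hre : μ * (ω * Real.sqrt (ρ / μ)) ^ 2 = ρ * ω ^ 2 := by
      rw [mul_pow, Real.sq_sqrt (by positivity)]
      field_simp
    exact_mod_cast hre
  have hkp2 : ((lam : ℂ) + 2 * (μ : ℂ)) * kp ^ 2 = (ρ : ℂ) * (ω : ℂ) ^ 2 := by
    rw [hkp]
    have hre : (lam + 2 * μ) * (ω * Real.sqrt (ρ / (lam + 2 * μ))) ^ 2 = ρ * ω ^ 2 := by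
      rw [mul_pow, Real.sq_sqrt (by positivity)]
      field_simp
    exact_mod_cast hre
  have hkpne : kp ^ 2 ≠ 0 := by
    intro h
    rw [h, mul_zero] at hkp2
    exact hRc hkp2.symm
  have hKc : (κ : ℂ) ≠ 0 := Complex.ofReal_ne_zero.mpr (ne_of_gt hκ)
  have hIω : Complex.I * (ω : ℂ) = q * (κ : ℂ) := by
    rw [hq]
    field_simp
  have key1 : (kp ^ 2 - k2 ^ 2) * (k1 ^ 2 - kp ^ 2)
      = q * ((gam * η * κ / (lam + 2 * μ) : ℝ) : ℂ) * kp ^ 2 := by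
    linear_combination kp ^ 2 * hchar1 - hchar2
  have key2 : (kp ^ 2 - k1 ^ 2) * (kp ^ 2 - k2 ^ 2)
      = -(q * ((gam * η * κ / (lam + 2 * μ) : ℝ) : ℂ) * kp ^ 2) := by
    linear_combination -kp ^ 2 * hchar1 + hchar2
  have hepsC : ((gam * η * κ / (lam + 2 * μ) : ℝ) : ℂ) * ((lam : ℂ) + 2 * (μ : ℂ))
      = (gam : ℂ) * (η : ℂ) * (κ : ℂ) := by
    push_cast
    field_simp
  have hne' : k1 ^ 2 - k2 ^ 2 ≠ 0 := sub_ne_zero.mpr hne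
  obtain ⟨B, hB⟩ : ∃ c : ℂ, c = 1 / ((ρ : ℂ) * (ω : ℂ) ^ 2) := ⟨_, rfl⟩
  obtain ⟨Cp, hCp⟩ : ∃ c : ℂ,
      c = (1 / ((ρ : ℂ) * (ω : ℂ) ^ 2)) * ((kp ^ 2 - k1 ^ 2) / (k1 ^ 2 - k2 ^ 2)) := ⟨_, rfl⟩
  obtain ⟨aP, haP⟩ : ∃ c : ℂ,
      c = Complex.I * (ω : ℂ) * (η : ℂ) / ((k1 ^ 2 - k2 ^ 2) * ((lam : ℂ) + 2 * (μ : ℂ))) :=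
    ⟨_, rfl⟩
  have hE11eq : ∀ (i : Fin 3) (z : V3), z ≠ y → E11 μ ρ ω ks kp k1 k2 i j z y
      = ((1 / (μ : ℂ)) * Biot.dl i j) * Biot.Ph ks y 0 z + B * Biot.D2 ks y i j z
        + (-(B + Cp)) * Biot.D2 k1 y i j z + Cp * Biot.D2 k2 y i j z := by
    intro i z hz
    unfold E11
    rw [Biot.pdpd_gamma_sub ks k1 hz i j, Biot.pdpd_gamma_sub k1 k2 hz i j,
      Biot.gamma_eq ks y z hz]
    rw [hB, hCp]
    unfold Biot.dl
    ring
  have hE21eq : ∀ z, z ≠ y → E21 lam μ ω η k1 k2 j z y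
      = aP * Biot.D1 k1 y j z + (-aP) * Biot.D1 k2 y j z + 0 * Biot.Ph k1 y 0 z
        + 0 * Biot.Ph k1 y 0 z := by
    intro z hz
    unfold E21
    rw [Biot.pd_gamma_sub k1 k2 hz j, haP]
    ring
  have hpdE11 : ∀ (i l : Fin 3) (z : V3), z ≠ y →
      pd l (fun w => E11 μ ρ ω ks kp k1 k2 i j w y) z
      = ((1 / (μ : ℂ)) * Biot.dl i j) * Biot.D1 ks y l z + B * Biot.D3 ks y l i j z
        + (-(B + Cp)) * Biot.D3 k1 y l i j z + Cp * Biot.D3 k2 y l i j z := by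
    intro i l z hz
    rw [Biot.pd_congr (hE11eq i) hz l]
    rw [Biot.pd4 _ _ _ _ (Biot.diff_Ph (by norm_num) hz) (Biot.diff_D2 hz) (Biot.diff_D2 hz)
      (Biot.diff_D2 hz) l]
    rw [Biot.pd_Ph (by norm_num) hz l, Biot.pd_D2 hz l i j, Biot.pd_D2 hz l i j,
      Biot.pd_D2 hz l i j]
    simp only [Biot.D1]
  have hlapterm : ∀ (i l : Fin 3),
      pd l (pd l (fun z => E11 μ ρ ω ks kp k1 k2 i j z y)) x
      = ((1 / (μ : ℂ)) * Biot.dl i j) * Biot.D2 ks y l l x + B * Biot.D4 ks y l l i j x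
        + (-(B + Cp)) * Biot.D4 k1 y l l i j x + Cp * Biot.D4 k2 y l l i j x := by
    intro i l
    rw [Biot.pd_congr (fun z hz => hpdE11 i l z hz) hxy l]
    rw [Biot.pd4 _ _ _ _ (Biot.diff_D1 hxy) (Biot.diff_D3 hxy) (Biot.diff_D3 hxy)
      (Biot.diff_D3 hxy) l]
    rw [Biot.pd_D1 hxy l l, Biot.pd_D3 hxy l l i j, Biot.pd_D3 hxy l l i j,
      Biot.pd_D3 hxy l l i j]
  have hlapE : ∀ i : Fin 3, lap (fun z => E11 μ ρ ω ks kp k1 k2 i j z y) x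
      = ((1 / (μ : ℂ)) * Biot.dl i j) * (-ks ^ 2 * Biot.Ph ks y 0 x)
        + B * (-ks ^ 2 * Biot.D2 ks y i j x) + (-(B + Cp)) * (-k1 ^ 2 * Biot.D2 k1 y i j x)
        + Cp * (-k2 ^ 2 * Biot.D2 k2 y i j x) := by
    intro i
    show (∑ l, pd l (pd l (fun z => E11 μ ρ ω ks kp k1 k2 i j z y)) x) = _
    rw [Fin.sum_univ_three, hlapterm i 0, hlapterm i 1, hlapterm i 2]
    linear_combination ((1 / (μ : ℂ)) * Biot.dl i j) * Biot.contr2 (k := ks) hxy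
      + B * Biot.contr4 (k := ks) hxy i j + (-(B + Cp)) * Biot.contr4 (k := k1) hxy i j
      + Cp * Biot.contr4 (k := k2) hxy i j
  have hdiveq : ∀ z, z ≠ y → (∑ l, pd l (fun w => E11 μ ρ ω ks kp k1 k2 l j w y) z)
      = (1 / (μ : ℂ) - B * ks ^ 2) * Biot.D1 ks y j z
        + ((B + Cp) * k1 ^ 2) * Biot.D1 k1 y j z
        + (-(Cp * k2 ^ 2)) * Biot.D1 k2 y j z + 0 * Biot.Ph ks y 0 z := by
    intro z hz
    rw [Fin.sum_univ_three, hpdE11 0 0 z hz, hpdE11 1 1 z hz, hpdE11 2 2 z hz]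
    linear_combination (1 / (μ : ℂ)) * Biot.dlD1 (k := ks) (y := y) (x := z) j
      + B * Biot.contr3 (k := ks) hz j + (-(B + Cp)) * Biot.contr3 (k := k1) hz j
      + Cp * Biot.contr3 (k := k2) hz j
  have hdivd : ∀ i : Fin 3,
      pd i (fun z => ∑ l, pd l (fun w => E11 μ ρ ω ks kp k1 k2 l j w y) z) x
      = (1 / (μ : ℂ) - B * ks ^ 2) * Biot.D2 ks y i j x
        + ((B + Cp) * k1 ^ 2) * Biot.D2 k1 y i j x
        + (-(Cp * k2 ^ 2)) * Biot.D2 k2 y i j x + 0 * pd i (Biot.Ph ks y 0) x := by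
    intro i
    rw [Biot.pd_congr hdiveq hxy i]
    rw [Biot.pd4 _ _ _ _ (Biot.diff_D1 hxy) (Biot.diff_D1 hxy) (Biot.diff_D1 hxy)
      (Biot.diff_Ph (by norm_num) hxy) i]
    rw [Biot.pd_D1 hxy i j, Biot.pd_D1 hxy i j, Biot.pd_D1 hxy i j]
  have hpdE21 : ∀ i : Fin 3, pd i (fun z => E21 lam μ ω η k1 k2 j z y) x
      = aP * Biot.D2 k1 y i j x + (-aP) * Biot.D2 k2 y i j x
        + 0 * pd i (Biot.Ph k1 y 0) x + 0 * pd i (Biot.Ph k1 y 0) x := by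
    intro i
    rw [Biot.pd_congr hE21eq hxy i]
    rw [Biot.pd4 _ _ _ _ (Biot.diff_D1 hxy) (Biot.diff_D1 hxy)
      (Biot.diff_Ph (by norm_num) hxy) (Biot.diff_Ph (by norm_num) hxy) i]
    rw [Biot.pd_D1 hxy i j, Biot.pd_D1 hxy i j]
  have hpdE21l : ∀ (l : Fin 3) (z : V3), z ≠ y →
      pd l (fun w => E21 lam μ ω η k1 k2 j w y) z
      = aP * Biot.D2 k1 y l j z + (-aP) * Biot.D2 k2 y l j z
        + 0 * Biot.Ph k1 y 0 z + 0 * Biot.Ph k1 y 0 z := by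
    intro l z hz
    rw [Biot.pd_congr hE21eq hz l]
    rw [Biot.pd4 _ _ _ _ (Biot.diff_D1 hz) (Biot.diff_D1 hz)
      (Biot.diff_Ph (by norm_num) hz) (Biot.diff_Ph (by norm_num) hz) l]
    rw [Biot.pd_D1 hz l j, Biot.pd_D1 hz l j]
    ring
  have hlapE21 : lap (fun z => E21 lam μ ω η k1 k2 j z y) x
      = aP * (-k1 ^ 2 * Biot.D1 k1 y j x) + (-aP) * (-k2 ^ 2 * Biot.D1 k2 y j x) := by
    show (∑ l, pd l (pd l (fun z => E21 lam μ ω η k1 k2 j z y)) x) = _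
    have hterm : ∀ l : Fin 3, pd l (pd l (fun z => E21 lam μ ω η k1 k2 j z y)) x
        = aP * Biot.D3 k1 y l l j x + (-aP) * Biot.D3 k2 y l l j x := by
      intro l
      rw [Biot.pd_congr (fun z hz => hpdE21l l z hz) hxy l]
      rw [Biot.pd4 _ _ _ _ (Biot.diff_D2 hxy) (Biot.diff_D2 hxy)
        (Biot.diff_Ph (by norm_num) hxy) (Biot.diff_Ph (by norm_num) hxy) l]
      rw [Biot.pd_D2 hxy l l j, Biot.pd_D2 hxy l l j]
      ring
    rw [Fin.sum_univ_three, hterm 0, hterm 1, hterm 2]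
    linear_combination aP * Biot.contr3 (k := k1) hxy j + (-aP) * Biot.contr3 (k := k2) hxy j
  have key1'' : (kp ^ 2 - k2 ^ 2) * (k1 ^ 2 - kp ^ 2) * ((lam : ℂ) + 2 * (μ : ℂ))
      = q * ((gam : ℂ) * (η : ℂ) * (κ : ℂ)) * kp ^ 2 := by
    linear_combination ((lam : ℂ) + 2 * (μ : ℂ)) * key1 + q * kp ^ 2 * hepsC
  have key2'' : (kp ^ 2 - k1 ^ 2) * (kp ^ 2 - k2 ^ 2) * ((lam : ℂ) + 2 * (μ : ℂ))
      = -(q * ((gam : ℂ) * (η : ℂ) * (κ : ℂ)) * kp ^ 2) := by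
    linear_combination ((lam : ℂ) + 2 * (μ : ℂ)) * key2 - q * kp ^ 2 * hepsC
  have hks2ne : ks ^ 2 ≠ 0 := by
    intro h
    rw [h, mul_zero] at hks2
    exact hRc hks2.symm
  have hksne : ks ≠ 0 := fun h => hks2ne (by rw [h]; ring)
  have hBCp' : (B + Cp) * ((k1 ^ 2 - k2 ^ 2) * (((lam : ℂ) + 2 * (μ : ℂ)) * kp ^ 2))
      = kp ^ 2 - k2 ^ 2 := by
    rw [hB, hCp, ← hkp2]
    field_simp [show kp ≠ 0 from fun h => hkpne (by rw [h]; ring)]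
    try ring
    try tauto
  have hCp' : Cp * ((k1 ^ 2 - k2 ^ 2) * (((lam : ℂ) + 2 * (μ : ℂ)) * kp ^ 2))
      = kp ^ 2 - k1 ^ 2 := by
    rw [hCp, ← hkp2]
    field_simp [show kp ≠ 0 from fun h => hkpne (by rw [h]; ring)]
  have haP' : aP * ((k1 ^ 2 - k2 ^ 2) * ((lam : ℂ) + 2 * (μ : ℂ))) = q * (κ : ℂ) * (η : ℂ) := by
    rw [haP, hIω]
    field_simp
  have hNne : ((k1 ^ 2 - k2 ^ 2) * (((lam : ℂ) + 2 * (μ : ℂ)) * kp ^ 2)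
      * ((lam : ℂ) + 2 * (μ : ℂ))) ≠ 0 :=
    mul_ne_zero (mul_ne_zero hne' (mul_ne_zero hL2 hkpne)) hL2
  have cPhi : (μ : ℂ) * ((1 / (μ : ℂ)) * (-ks ^ 2)) + (ρ : ℂ) * (ω : ℂ) ^ 2 * (1 / (μ : ℂ))
      = 0 := by
    rw [← hks2]
    field_simp
    try ring
  have cX : (μ : ℂ) * (B * (-ks ^ 2)) + ((lam : ℂ) + (μ : ℂ)) * (1 / (μ : ℂ) - B * ks ^ 2)
      + (ρ : ℂ) * (ω : ℂ) ^ 2 * B = 0 := by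
    rw [hB, ← hks2]
    field_simp [hksne]
    try ring
  have cY : (μ : ℂ) * ((-(B + Cp)) * (-k1 ^ 2)) + ((lam : ℂ) + (μ : ℂ)) * ((B + Cp) * k1 ^ 2)
      + (ρ : ℂ) * (ω : ℂ) ^ 2 * (-(B + Cp)) - (gam : ℂ) * aP = 0 := by
    have hEN : ((μ : ℂ) * ((-(B + Cp)) * (-k1 ^ 2))
        + ((lam : ℂ) + (μ : ℂ)) * ((B + Cp) * k1 ^ 2)
        + (ρ : ℂ) * (ω : ℂ) ^ 2 * (-(B + Cp)) - (gam : ℂ) * aP)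
        * ((k1 ^ 2 - k2 ^ 2) * (((lam : ℂ) + 2 * (μ : ℂ)) * kp ^ 2)
          * ((lam : ℂ) + 2 * (μ : ℂ))) = 0 := by
      rw [← hkp2]
      linear_combination (((lam : ℂ) + 2 * (μ : ℂ)) * k1 ^ 2
          - ((lam : ℂ) + 2 * (μ : ℂ)) * kp ^ 2) * ((lam : ℂ) + 2 * (μ : ℂ)) * hBCp'
        - (gam : ℂ) * (((lam : ℂ) + 2 * (μ : ℂ)) * kp ^ 2) * haP'
        + ((lam : ℂ) + 2 * (μ : ℂ)) * key1''
    exact (mul_eq_zero.mp hEN).resolve_right hNne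
  have cZ : (μ : ℂ) * (Cp * (-k2 ^ 2)) + ((lam : ℂ) + (μ : ℂ)) * (-(Cp * k2 ^ 2))
      + (ρ : ℂ) * (ω : ℂ) ^ 2 * Cp + (gam : ℂ) * aP = 0 := by
    have hEN : ((μ : ℂ) * (Cp * (-k2 ^ 2)) + ((lam : ℂ) + (μ : ℂ)) * (-(Cp * k2 ^ 2))
        + (ρ : ℂ) * (ω : ℂ) ^ 2 * Cp + (gam : ℂ) * aP)
        * ((k1 ^ 2 - k2 ^ 2) * (((lam : ℂ) + 2 * (μ : ℂ)) * kp ^ 2)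
          * ((lam : ℂ) + 2 * (μ : ℂ))) = 0 := by
      rw [← hkp2]
      linear_combination (((lam : ℂ) + 2 * (μ : ℂ)) * kp ^ 2
          - ((lam : ℂ) + 2 * (μ : ℂ)) * k2 ^ 2) * ((lam : ℂ) + 2 * (μ : ℂ)) * hCp'
        + (gam : ℂ) * (((lam : ℂ) + 2 * (μ : ℂ)) * kp ^ 2) * haP'
        + ((lam : ℂ) + 2 * (μ : ℂ)) * key2''
    exact (mul_eq_zero.mp hEN).resolve_right hNne
  have cT : Complex.I * (ω : ℂ) * (η : ℂ) * (1 / (μ : ℂ) - B * ks ^ 2) = 0 := by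
    rw [hB, ← hks2]
    field_simp [hksne]
    try ring
  have cU : aP * (-k1 ^ 2) + q * aP + Complex.I * (ω : ℂ) * (η : ℂ) * ((B + Cp) * k1 ^ 2)
      = 0 := by
    have hEN : (aP * (-k1 ^ 2) + q * aP
        + Complex.I * (ω : ℂ) * (η : ℂ) * ((B + Cp) * k1 ^ 2))
        * ((k1 ^ 2 - k2 ^ 2) * (((lam : ℂ) + 2 * (μ : ℂ)) * kp ^ 2)
          * ((lam : ℂ) + 2 * (μ : ℂ))) = 0 := by
      linear_combination (q - k1 ^ 2) * (((lam : ℂ) + 2 * (μ : ℂ)) * kp ^ 2) * haP'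
        + Complex.I * (ω : ℂ) * (η : ℂ) * k1 ^ 2 * ((lam : ℂ) + 2 * (μ : ℂ)) * hBCp'
        + (η : ℂ) * k1 ^ 2 * ((lam : ℂ) + 2 * (μ : ℂ)) * (kp ^ 2 - k2 ^ 2) * hIω
        - q * (κ : ℂ) * (η : ℂ) * ((lam : ℂ) + 2 * (μ : ℂ)) * hchar2
    exact (mul_eq_zero.mp hEN).resolve_right hNne
  have cV : aP * k2 ^ 2 - q * aP + Complex.I * (ω : ℂ) * (η : ℂ) * (-(Cp * k2 ^ 2)) = 0 := by
    have hEN : (aP * k2 ^ 2 - q * aP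
        + Complex.I * (ω : ℂ) * (η : ℂ) * (-(Cp * k2 ^ 2)))
        * ((k1 ^ 2 - k2 ^ 2) * (((lam : ℂ) + 2 * (μ : ℂ)) * kp ^ 2)
          * ((lam : ℂ) + 2 * (μ : ℂ))) = 0 := by
      linear_combination (k2 ^ 2 - q) * (((lam : ℂ) + 2 * (μ : ℂ)) * kp ^ 2) * haP'
        - Complex.I * (ω : ℂ) * (η : ℂ) * k2 ^ 2 * ((lam : ℂ) + 2 * (μ : ℂ)) * hCp'
        - (η : ℂ) * k2 ^ 2 * ((lam : ℂ) + 2 * (μ : ℂ)) * (kp ^ 2 - k1 ^ 2) * hIω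
        + q * (κ : ℂ) * (η : ℂ) * ((lam : ℂ) + 2 * (μ : ℂ)) * hchar2
    exact (mul_eq_zero.mp hEN).resolve_right hNne
  constructor
  · intro i
    rw [hlapE i, hdivd i, hE11eq i x hxy, hpdE21 i]
    linear_combination Biot.dl i j * Biot.Ph ks y 0 x * cPhi + Biot.D2 ks y i j x * cX
      + Biot.D2 k1 y i j x * cY + Biot.D2 k2 y i j x * cZ
  · rw [hlapE21, hE21eq x hxy, hdiveq x hxy]
    linear_combination Biot.D1 ks y j x * cT + Biot.D1 k1 y j x * cU + Biot.D1 k2 y j x * cV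
end
end
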